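/- For a positive linear map L: B(H_n) → B(H_m), the operator H = (1⊗L)(|Ψ⁺⟩⟨Ψ⁺|), where |Ψ⁺⟩ = Σ_{i=1}^n |i,i⟩, satisfies Tr(H σ) ≥ 0 for all separable density matrices σ on H_n⊗H_m; conversely if H satisfies this property then L is positive. -/

import Mathlib

open Matrix Kronecker
open scoped ComplexOrder

def SepState {nA nB : Type*} [Fintype nA] [Fintype nB]
    (ρ : Matrix (nA × nB) (nA × nB) ℂ) : Prop :=
  ∃ (k : ℕ) (p : Fin k → ℝ) (a : Fin k → nA → ℂ) (b : Fin k → nB → ℂ),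
    (∀ i, 0 ≤ p i) ∧ (∑ i, p i = 1) ∧
    (∀ i, ∑ x, ‖a i x‖ ^ 2 = 1) ∧ (∀ i, ∑ x, ‖b i x‖ ^ 2 = 1) ∧
    ρ = ∑ i, (p i : ℂ) •
      (vecMulVec (a i) (star (a i)) ⊗ₖ vecMulVec (b i) (star (b i)))

/-- The operator `H = (1 ⊗ L)(|Ψ⁺⟩⟨Ψ⁺|)` where `|Ψ⁺⟩ = Σᵢ |i,i⟩` is unnormalized:
its `(i,j)` block is `L(|i⟩⟨j|)`. -/
def choiMatrix {n m : ℕ}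
    (L : Matrix (Fin n) (Fin n) ℂ →ₗ[ℂ] Matrix (Fin m) (Fin m) ℂ) :
    Matrix (Fin n × Fin m) (Fin n × Fin m) ℂ :=
  fun p q => L (Matrix.single p.1 q.1 1) p.2 q.2

section aux

/-- A complex matrix with nonnegative quadratic form is Hermitian. -/
lemma aux_isHermitian_of_nonneg {k : Type*} [Fintype k] [DecidableEq k] (A : Matrix k k ℂ)
    (h : ∀ x : k → ℂ, 0 ≤ star x ⬝ᵥ A.mulVec x) : A.IsHermitian := by
  have hsa : ∀ x : k → ℂ, (starRingEnd ℂ) (star x ⬝ᵥ A.mulVec x) = star x ⬝ᵥ A.mulVec x :=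
    fun x => IsSelfAdjoint.of_nonneg (h x)
  have e1 : ∀ x y : k → ℂ, (starRingEnd ℂ) (star x ⬝ᵥ A.mulVec y) +
      (starRingEnd ℂ) (star y ⬝ᵥ A.mulVec x) = star x ⬝ᵥ A.mulVec y + star y ⬝ᵥ A.mulVec x := by
    intro x y
    have h1 := hsa (x + y)
    simp only [star_add, Matrix.mulVec_add, dotProduct_add, add_dotProduct, map_add] at h1
    linear_combination h1 - hsa x - hsa y
  have key : ∀ x y : k → ℂ, (starRingEnd ℂ) (star x ⬝ᵥ A.mulVec y) = star y ⬝ᵥ A.mulVec x := by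
    intro x y
    have h1 := e1 x y
    have h2 := e1 x (Complex.I • y)
    simp only [star_smul, Matrix.mulVec_smul, dotProduct_smul, smul_dotProduct,
      Complex.star_def, Complex.conj_I, smul_eq_mul, _root_.map_mul, map_neg,
      neg_mul, mul_neg] at h2
    set u := star x ⬝ᵥ A.mulVec y
    set v := star y ⬝ᵥ A.mulVec x
    linear_combination h1/2 + (Complex.I/2) * h2 +
      (((starRingEnd ℂ) u - (starRingEnd ℂ) v + u - v)/2) * Complex.I_mul_I
  show Aᴴ = A
  ext i j
  have := key (Pi.single j 1) (Pi.single i 1)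
  simp only [conjTranspose_apply]
  simpa [dotProduct, Matrix.mulVec_single, Pi.single_apply, apply_ite, Finset.sum_ite_eq,
    Finset.sum_ite_eq'] using this

/-- Rank-one matrices `v v*` are positive semidefinite. -/
lemma aux_psd_vecMulVec {k : Type*} [Fintype k] (v : k → ℂ) :
    (vecMulVec v (star v)).PosSemidef := by
  refine Matrix.PosSemidef.of_dotProduct_mulVec_nonneg ?_ ?_
  · show _ᴴ = _
    ext i j
    simp [vecMulVec_apply, mul_comm]
  · intro x
    have hq : star x ⬝ᵥ (vecMulVec v (star v)).mulVec x
        = (star x ⬝ᵥ v) * star (star x ⬝ᵥ v) := by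
      simp only [dotProduct, Matrix.mulVec, vecMulVec_apply, Pi.star_apply, star_sum, star_mul',
        star_star, Finset.mul_sum, Finset.sum_mul]
      rw [Finset.sum_comm]
      refine Finset.sum_congr rfl fun i _ => Finset.sum_congr rfl fun j _ => ?_
      ring
    rw [hq]
    exact mul_star_self_nonneg _

/-- The fundamental trace identity. -/
lemma aux_trace {n m : ℕ} (L : Matrix (Fin n) (Fin n) ℂ →ₗ[ℂ] Matrix (Fin m) (Fin m) ℂ)
    (a : Fin n → ℂ) (b : Fin m → ℂ) :
    (choiMatrix L * (vecMulVec a (star a) ⊗ₖ vecMulVec b (star b))).trace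
      = star b ⬝ᵥ (L (vecMulVec (star a) a)).mulVec b := by
  have hM : vecMulVec (star a) a = ∑ i, ∑ j, (star (a i) * a j) • Matrix.single i j (1:ℂ) := by
    nth_rewrite 1 [Matrix.matrix_eq_sum_single (vecMulVec (star a) a)]
    refine Finset.sum_congr rfl fun i _ => Finset.sum_congr rfl fun j _ => ?_
    rw [Matrix.smul_single, smul_eq_mul, mul_one, vecMulVec_apply, Pi.star_apply]
  have hL : ∀ s t, L (vecMulVec (star a) a) s t
      = ∑ i, ∑ j, (star (a i) * a j) * L (Matrix.single i j 1) s t := by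
    intro s t
    rw [hM]
    simp only [map_sum, _root_.map_smul, Matrix.sum_apply, Matrix.smul_apply, smul_eq_mul]
  simp only [Matrix.trace, Matrix.diag_apply, Matrix.mul_apply, Fintype.sum_prod_type,
    choiMatrix, kroneckerMap_apply, vecMulVec_apply, Pi.star_apply, dotProduct,
    Matrix.mulVec, hL, Finset.sum_mul, Finset.mul_sum]
  rw [Finset.sum_comm]
  refine Finset.sum_congr rfl fun s _ => ?_
  conv_lhs => enter [2, i]; rw [Finset.sum_comm]
  rw [Finset.sum_comm]
  refine Finset.sum_congr rfl fun t _ => ?_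
  refine Finset.sum_congr rfl fun i _ => ?_
  refine Finset.sum_congr rfl fun j _ => ?_
  ring

/-- Trace of a rank-one matrix. -/
lemma aux_trace_vecMulVec {k : Type*} [Fintype k] (v : k → ℂ) :
    (vecMulVec v (star v)).trace = ((∑ x, ‖v x‖ ^ 2 : ℝ) : ℂ) := by
  rw [Matrix.trace]
  push_cast
  refine Finset.sum_congr rfl fun i _ => ?_
  simp [vecMulVec_apply, Matrix.diag_apply, Complex.mul_conj', Complex.mul_conj,
    Complex.normSq_eq_norm_sq]

end aux

/-- Jamiołkowski correspondence: `L` is a positive map iff its Choi operator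
`H = (1⊗L)(|Ψ⁺⟩⟨Ψ⁺|)` has nonnegative expectation on every separable density matrix. -/
theorem stmt5 {n m : ℕ}
    (L : Matrix (Fin n) (Fin n) ℂ →ₗ[ℂ] Matrix (Fin m) (Fin m) ℂ) :
    (∀ X : Matrix (Fin n) (Fin n) ℂ, X.PosSemidef → (L X).PosSemidef) ↔
      (∀ σ : Matrix (Fin n × Fin m) (Fin n × Fin m) ℂ,
        σ.PosSemidef → σ.trace = 1 → SepState σ → 0 ≤ (choiMatrix L * σ).trace) := by
  constructor
  · rintro hL σ - - ⟨k, p, a, b, hp, -, -, -, rfl⟩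
    rw [Matrix.mul_sum, Matrix.trace_sum]
    refine Finset.sum_nonneg fun i _ => ?_
    rw [mul_smul_comm, Matrix.trace_smul, smul_eq_mul]
    refine mul_nonneg (Complex.zero_le_real.mpr (hp i)) ?_
    rw [aux_trace]
    have hpsd : (vecMulVec (star (a i)) (a i)).PosSemidef := by
      simpa [star_star] using aux_psd_vecMulVec (star (a i))
    exact (hL _ hpsd).dotProduct_mulVec_nonneg (b i)
  · intro h X hX
    -- main claim: rank-one positivity
    have claim : ∀ (c : Fin n → ℂ) (y : Fin m → ℂ),
        0 ≤ star y ⬝ᵥ (L (vecMulVec c (star c))).mulVec y := by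
      intro c y
      by_cases hc : c = 0
      · have : vecMulVec c (star c) = 0 := by
          ext i j
          simp [hc, vecMulVec_apply]
        simp [this]
      by_cases hy : y = 0
      · simp [hy]
      -- normalization constants
      have hSc : 0 < ∑ x, ‖c x‖ ^ 2 := by
        obtain ⟨i, hi⟩ := Function.ne_iff.mp hc
        exact Finset.sum_pos' (fun x _ => by positivity)
          ⟨i, Finset.mem_univ i, by simpa [sq_pos_iff] using hi⟩
      have hSy : 0 < ∑ x, ‖y x‖ ^ 2 := by
        obtain ⟨s, hs⟩ := Function.ne_iff.mp hy
        exact Finset.sum_pos' (fun x _ => by positivity)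
          ⟨s, Finset.mem_univ s, by simpa [sq_pos_iff] using hs⟩
      set α : ℝ := Real.sqrt (∑ x, ‖c x‖ ^ 2) with hαdef
      set β : ℝ := Real.sqrt (∑ x, ‖y x‖ ^ 2) with hβdef
      have hα0 : 0 < α := Real.sqrt_pos.mpr hSc
      have hβ0 : 0 < β := Real.sqrt_pos.mpr hSy
      have hα2 : α ^ 2 = ∑ x, ‖c x‖ ^ 2 := Real.sq_sqrt hSc.le
      have hβ2 : β ^ 2 = ∑ x, ‖y x‖ ^ 2 := Real.sq_sqrt hSy.le
      set a : Fin n → ℂ := fun i => ((α : ℂ))⁻¹ * star (c i) with hadef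
      set b : Fin m → ℂ := fun s => ((β : ℂ))⁻¹ * y s with hbdef
      have hna : ∑ x, ‖a x‖ ^ 2 = 1 := by
        have : ∀ x, ‖a x‖ ^ 2 = α⁻¹ ^ 2 * ‖c x‖ ^ 2 := by
          intro x
          simp [hadef, norm_mul, mul_pow]
        rw [Finset.sum_congr rfl fun x _ => this x, ← Finset.mul_sum, ← hα2]
        field_simp
      have hnb : ∑ x, ‖b x‖ ^ 2 = 1 := by
        have : ∀ x, ‖b x‖ ^ 2 = β⁻¹ ^ 2 * ‖y x‖ ^ 2 := by
          intro x
          simp [hbdef, norm_mul, mul_pow]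
        rw [Finset.sum_congr rfl fun x _ => this x, ← Finset.mul_sum, ← hβ2]
        field_simp
      set σ : Matrix (Fin n × Fin m) (Fin n × Fin m) ℂ :=
        vecMulVec a (star a) ⊗ₖ vecMulVec b (star b) with hσdef
      have hσpsd : σ.PosSemidef := by
        have hkron : σ = vecMulVec (fun p : Fin n × Fin m => a p.1 * b p.2)
            (star (fun p : Fin n × Fin m => a p.1 * b p.2)) := by
          ext ⟨i, s⟩ ⟨j, t⟩
          simp [hσdef, vecMulVec_apply, kroneckerMap_apply]
          ring
        rw [hkron]
        exact aux_psd_vecMulVec _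
      have hσtr : σ.trace = 1 := by
        rw [hσdef, Matrix.trace_kronecker, aux_trace_vecMulVec, aux_trace_vecMulVec, hna, hnb]
        norm_num
      have hσsep : SepState σ := by
        refine ⟨1, fun _ => 1, fun _ => a, fun _ => b, fun _ => zero_le_one, by simp,
          fun _ => hna, fun _ => hnb, by simp [hσdef]⟩
      have hQ := h σ hσpsd hσtr hσsep
      rw [aux_trace] at hQ
      -- rewrite the goal in terms of a, b
      have h1 : vecMulVec c (star c) = ((α : ℂ) * α) • vecMulVec (star a) a := by
        ext i j
        have hαne : (α : ℂ) ≠ 0 := by exact_mod_cast hα0.ne'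
        simp only [vecMulVec_apply, Pi.star_apply, Matrix.smul_apply, hadef, smul_eq_mul,
          star_mul', star_star, star_inv₀, Complex.star_def, Complex.conj_ofReal]
        field_simp
        rw [Complex.conj_conj]
        ring
      have h2 : y = fun s => (β : ℂ) * b s := by
        funext s
        have hβne : (β : ℂ) ≠ 0 := by exact_mod_cast hβ0.ne'
        simp only [hbdef]
        field_simp
      have key : star y ⬝ᵥ (L (vecMulVec c (star c))).mulVec y
          = ((α : ℂ) * α * β * β) * (star b ⬝ᵥ (L (vecMulVec (star a) a)).mulVec b) := by
        rw [h1, _root_.map_smul, h2]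
        simp only [dotProduct, Matrix.mulVec, Matrix.smul_apply, Pi.star_apply, smul_eq_mul,
          Complex.star_def, _root_.map_mul, Complex.conj_ofReal, Finset.mul_sum, Finset.sum_mul]
        refine Finset.sum_congr rfl fun s _ => Finset.sum_congr rfl fun t _ => ?_
        ring
      rw [key]
      refine mul_nonneg ?_ hQ
      have h0 : (0:ℝ) ≤ α * α * β * β :=
        mul_nonneg (mul_nonneg (mul_nonneg hα0.le hα0.le) hβ0.le) hβ0.le
      have h0' := Complex.zero_le_real.mpr h0
      push_cast at h0'
      exact h0'
    -- conclude: X = Σ rank-ones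
    open scoped MatrixOrder in
    obtain ⟨B, rfl⟩ := CStarAlgebra.nonneg_iff_eq_star_mul_self.mp hX.nonneg
    have hdecomp : Bᴴ * B = ∑ k : Fin n, vecMulVec (fun i => star (B k i)) (star fun i => star (B k i)) := by
      ext i j
      rw [Matrix.mul_apply, Matrix.sum_apply]
      refine Finset.sum_congr rfl fun k _ => ?_
      simp [vecMulVec_apply, Matrix.conjTranspose_apply]
    have hsumquad : ∀ (F : Fin n → Matrix (Fin m) (Fin m) ℂ) (y : Fin m → ℂ),
        star y ⬝ᵥ (∑ k, F k).mulVec y = ∑ k, star y ⬝ᵥ (F k).mulVec y := by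
      intro F y
      simp only [dotProduct, Matrix.mulVec, Matrix.sum_apply, Finset.sum_mul, Finset.mul_sum]
      conv_lhs => enter [2, s]; rw [Finset.sum_comm]
      rw [Finset.sum_comm]
    have hquad : ∀ y : Fin m → ℂ, 0 ≤ star y ⬝ᵥ (L (Bᴴ * B)).mulVec y := by
      intro y
      rw [hdecomp, map_sum, hsumquad]
      exact Finset.sum_nonneg fun k _ => claim _ y
    exact Matrix.PosSemidef.of_dotProduct_mulVec_nonneg (aux_isHermitian_of_nonneg _ hquad) hquad
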